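/- arXiv:1507.00166 — 3 statements merged into one kernel-verified Lean document; each statement's English description precedes it below -/
import Mathlib

section
/- If u : ℝ² → ℝ is twice continuously differentiable and satisfies f(u(x,y)+y) + g(u(x,y)-y) = x for all (x,y), where f, g : ℝ → ℝ are twice continuously differentiable, and u_x(x,y) ≠ 0, then u satisfies the Dubreil-Jacotin equation (u_y² − 1)·u_xx − 2·u_x·u_y·u_xy + u_x²·u_yy = 0 at (x,y). -/
noncomputable def ux (u : ℝ → ℝ → ℝ) (x y : ℝ) : ℝ := deriv (fun t => u t y) x
noncomputable def uy (u : ℝ → ℝ → ℝ) (x y : ℝ) : ℝ := deriv (fun t => u x t) y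
noncomputable def uxx (u : ℝ → ℝ → ℝ) (x y : ℝ) : ℝ := deriv (fun t => ux u t y) x
noncomputable def uxy (u : ℝ → ℝ → ℝ) (x y : ℝ) : ℝ := deriv (fun t => ux u x t) y
noncomputable def uyy (u : ℝ → ℝ → ℝ) (x y : ℝ) : ℝ := deriv (fun t => uy u x t) y

/-!
Differentiating the general integral once in `x` and once in `y` gives the first-order relations
`(f' + g') u_x = 1` and `f' (u_y + 1) + g' (u_y - 1) = 0`, with `f'`, `g'` evaluated at `u + y`
and `u - y`. Differentiating the first in `x` and in `y` and the second in `y` gives three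
relations linear in `u_xx`, `u_xy`, `u_yy` and in `f''`, `g''`. Weighting them by
`u_x (u_y² - 1)`, `-2 u_x² u_y` and `u_x³` eliminates `f''` and `g''`, and leaves `(f' + g') u_x`
times the Dubreil-Jacotin expression, i.e. the expression itself by the first relation.
-/

section PartialDerivatives

variable {u : ℝ → ℝ → ℝ}

theorem uxx_eq_ux_ux : uxx u = ux (ux u) := rfl

theorem uxy_eq_uy_ux : uxy u = uy (ux u) := rfl

theorem uyy_eq_uy_uy : uyy u = uy (uy u) := rfl

variable {a b : ℝ}

theorem hasDerivAt_fderiv_apply_fst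
    (hu : DifferentiableAt ℝ (fun p : ℝ × ℝ => u p.1 p.2) (a, b)) :
    HasDerivAt (fun t => u t b) (fderiv ℝ (fun p : ℝ × ℝ => u p.1 p.2) (a, b) (1, 0)) a := by
  have h := hu.hasFDerivAt.comp_hasDerivAt a
    ((hasDerivAt_id' a).prodMk (hasDerivAt_const a b))
  exact h

theorem hasDerivAt_fderiv_apply_snd
    (hu : DifferentiableAt ℝ (fun p : ℝ × ℝ => u p.1 p.2) (a, b)) :
    HasDerivAt (fun t => u a t) (fderiv ℝ (fun p : ℝ × ℝ => u p.1 p.2) (a, b) (0, 1)) b := by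
  have h := hu.hasFDerivAt.comp_hasDerivAt b
    ((hasDerivAt_const b a).prodMk (hasDerivAt_id' b))
  exact h

theorem ux_eq_fderiv (hu : DifferentiableAt ℝ (fun p : ℝ × ℝ => u p.1 p.2) (a, b)) :
    ux u a b = fderiv ℝ (fun p : ℝ × ℝ => u p.1 p.2) (a, b) (1, 0) :=
  (hasDerivAt_fderiv_apply_fst hu).deriv

theorem uy_eq_fderiv (hu : DifferentiableAt ℝ (fun p : ℝ × ℝ => u p.1 p.2) (a, b)) :
    uy u a b = fderiv ℝ (fun p : ℝ × ℝ => u p.1 p.2) (a, b) (0, 1) :=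
  (hasDerivAt_fderiv_apply_snd hu).deriv

theorem hasDerivAt_ux (hu : DifferentiableAt ℝ (fun p : ℝ × ℝ => u p.1 p.2) (a, b)) :
    HasDerivAt (fun t => u t b) (ux u a b) a :=
  ux_eq_fderiv hu ▸ hasDerivAt_fderiv_apply_fst hu

theorem hasDerivAt_uy (hu : DifferentiableAt ℝ (fun p : ℝ × ℝ => u p.1 p.2) (a, b)) :
    HasDerivAt (fun t => u a t) (uy u a b) b :=
  uy_eq_fderiv hu ▸ hasDerivAt_fderiv_apply_snd hu

theorem contDiff_ux {n : WithTop ℕ∞}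
    (hu : ContDiff ℝ (n + 1) (fun p : ℝ × ℝ => u p.1 p.2)) :
    ContDiff ℝ n (fun p : ℝ × ℝ => ux u p.1 p.2) := by
  have hd := hu.differentiable (by simp)
  rw [funext fun p : ℝ × ℝ => ux_eq_fderiv (hd p)]
  exact (hu.fderiv_right le_rfl).clm_apply contDiff_const

theorem contDiff_uy {n : WithTop ℕ∞}
    (hu : ContDiff ℝ (n + 1) (fun p : ℝ × ℝ => u p.1 p.2)) :
    ContDiff ℝ n (fun p : ℝ × ℝ => uy u p.1 p.2) := by
  have hd := hu.differentiable (by simp)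
  rw [funext fun p : ℝ × ℝ => uy_eq_fderiv (hd p)]
  exact (hu.fderiv_right le_rfl).clm_apply contDiff_const

theorem differentiable_ux (hu : ContDiff ℝ 2 (fun p : ℝ × ℝ => u p.1 p.2)) :
    Differentiable ℝ (fun p : ℝ × ℝ => ux u p.1 p.2) :=
  (contDiff_ux (n := 1) hu).differentiable one_ne_zero

theorem differentiable_uy (hu : ContDiff ℝ 2 (fun p : ℝ × ℝ => u p.1 p.2)) :
    Differentiable ℝ (fun p : ℝ × ℝ => uy u p.1 p.2) :=
  (contDiff_uy (n := 1) hu).differentiable one_ne_zero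

end PartialDerivatives

namespace GeneralIntegral

variable {u : ℝ → ℝ → ℝ} {f g : ℝ → ℝ}

theorem deriv_x (hu : Differentiable ℝ (fun p : ℝ × ℝ => u p.1 p.2))
    (hf : Differentiable ℝ f) (hg : Differentiable ℝ g)
    (heq : ∀ x y : ℝ, f (u x y + y) + g (u x y - y) = x) (a b : ℝ) :
    (deriv f (u a b + b) + deriv g (u a b - b)) * ux u a b = 1 := by
  have hux := hasDerivAt_ux (hu (a, b))
  have hsum := ((hf _).hasDerivAt.comp a (hux.add_const b)).add
    ((hg _).hasDerivAt.comp a (hux.sub_const b))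
  have hid : HasDerivAt (fun t => f (u t b + b) + g (u t b - b)) 1 a := by
    simpa only [heq] using hasDerivAt_id' a
  linear_combination hsum.unique hid

theorem deriv_y (hu : Differentiable ℝ (fun p : ℝ × ℝ => u p.1 p.2))
    (hf : Differentiable ℝ f) (hg : Differentiable ℝ g)
    (heq : ∀ x y : ℝ, f (u x y + y) + g (u x y - y) = x) (a b : ℝ) :
    deriv f (u a b + b) * (uy u a b + 1) + deriv g (u a b - b) * (uy u a b - 1) = 0 := by
  have huy := hasDerivAt_uy (hu (a, b))
  have hsum := ((hf _).hasDerivAt.comp b (huy.add (hasDerivAt_id' b))).add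
    ((hg _).hasDerivAt.comp b (huy.sub (hasDerivAt_id' b)))
  have hconst : HasDerivAt (fun t => f (u a t + t) + g (u a t - t)) 0 b := by
    simpa only [heq] using hasDerivAt_const b a
  exact hsum.unique hconst

theorem deriv_xx (hu : ContDiff ℝ 2 (fun p : ℝ × ℝ => u p.1 p.2))
    (hf : ContDiff ℝ 2 f) (hg : ContDiff ℝ 2 g)
    (heq : ∀ x y : ℝ, f (u x y + y) + g (u x y - y) = x) (a b : ℝ) :
    (deriv (deriv f) (u a b + b) + deriv (deriv g) (u a b - b)) * ux u a b ^ 2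
      + (deriv f (u a b + b) + deriv g (u a b - b)) * uxx u a b = 0 := by
  have hux := hasDerivAt_ux (hu.differentiable two_ne_zero (a, b))
  have hprod := (((hf.differentiable_deriv_two _).hasDerivAt.comp a (hux.add_const b)).add
    ((hg.differentiable_deriv_two _).hasDerivAt.comp a (hux.sub_const b))).mul
    (hasDerivAt_ux (differentiable_ux hu (a, b)))
  have hconst : HasDerivAt
      (fun t => (deriv f (u t b + b) + deriv g (u t b - b)) * ux u t b) 0 a := by
    simpa only [deriv_x (hu.differentiable two_ne_zero) (hf.differentiable two_ne_zero)
      (hg.differentiable two_ne_zero) heq] using hasDerivAt_const a (1 : ℝ)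
  have hzero := hprod.unique hconst
  simp only [Pi.add_apply, Function.comp_apply] at hzero
  rw [uxx_eq_ux_ux]
  linear_combination hzero

theorem deriv_xy (hu : ContDiff ℝ 2 (fun p : ℝ × ℝ => u p.1 p.2))
    (hf : ContDiff ℝ 2 f) (hg : ContDiff ℝ 2 g)
    (heq : ∀ x y : ℝ, f (u x y + y) + g (u x y - y) = x) (a b : ℝ) :
    (deriv (deriv f) (u a b + b) * (uy u a b + 1)
        + deriv (deriv g) (u a b - b) * (uy u a b - 1)) * ux u a b
      + (deriv f (u a b + b) + deriv g (u a b - b)) * uxy u a b = 0 := by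
  have huy := hasDerivAt_uy (hu.differentiable two_ne_zero (a, b))
  have hprod := (((hf.differentiable_deriv_two _).hasDerivAt.comp b
    (huy.add (hasDerivAt_id' b))).add
    ((hg.differentiable_deriv_two _).hasDerivAt.comp b (huy.sub (hasDerivAt_id' b)))).mul
    (hasDerivAt_uy (differentiable_ux hu (a, b)))
  have hconst : HasDerivAt
      (fun t => (deriv f (u a t + t) + deriv g (u a t - t)) * ux u a t) 0 b := by
    simpa only [deriv_x (hu.differentiable two_ne_zero) (hf.differentiable two_ne_zero)
      (hg.differentiable two_ne_zero) heq] using hasDerivAt_const b (1 : ℝ)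
  have hzero := hprod.unique hconst
  simp only [Pi.add_apply, Function.comp_apply] at hzero
  rw [uxy_eq_uy_ux]
  linear_combination hzero

theorem deriv_yy (hu : ContDiff ℝ 2 (fun p : ℝ × ℝ => u p.1 p.2))
    (hf : ContDiff ℝ 2 f) (hg : ContDiff ℝ 2 g)
    (heq : ∀ x y : ℝ, f (u x y + y) + g (u x y - y) = x) (a b : ℝ) :
    deriv (deriv f) (u a b + b) * (uy u a b + 1) ^ 2
      + deriv (deriv g) (u a b - b) * (uy u a b - 1) ^ 2
      + (deriv f (u a b + b) + deriv g (u a b - b)) * uyy u a b = 0 := by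
  have huy := hasDerivAt_uy (hu.differentiable two_ne_zero (a, b))
  have huyy := hasDerivAt_uy (differentiable_uy hu (a, b))
  have hsum := (((hf.differentiable_deriv_two _).hasDerivAt.comp b
    (huy.add (hasDerivAt_id' b))).mul (huyy.add_const 1)).add
    (((hg.differentiable_deriv_two _).hasDerivAt.comp b
    (huy.sub (hasDerivAt_id' b))).mul (huyy.sub_const 1))
  have hconst : HasDerivAt (fun t => deriv f (u a t + t) * (uy u a t + 1)
      + deriv g (u a t - t) * (uy u a t - 1)) 0 b := by
    simpa only [deriv_y (hu.differentiable two_ne_zero) (hf.differentiable two_ne_zero)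
      (hg.differentiable two_ne_zero) heq] using hasDerivAt_const b (0 : ℝ)
  have hzero := hsum.unique hconst
  simp only [Function.comp_apply] at hzero
  rw [uyy_eq_uy_uy]
  linear_combination hzero

end GeneralIntegral

theorem dubreil_jacotin_of_general_integral_general
    (u : ℝ → ℝ → ℝ) (f g : ℝ → ℝ)
    (hu : ContDiff ℝ 2 (fun p : ℝ × ℝ => u p.1 p.2))
    (hf : ContDiff ℝ 2 f) (hg : ContDiff ℝ 2 g)
    (heq : ∀ x y : ℝ, f (u x y + y) + g (u x y - y) = x)
    (x y : ℝ) :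
    ((uy u x y) ^ 2 - 1) * uxx u x y
      - 2 * ux u x y * uy u x y * uxy u x y
      + (ux u x y) ^ 2 * uyy u x y = 0 := by
  have hx := GeneralIntegral.deriv_x (hu.differentiable two_ne_zero)
    (hf.differentiable two_ne_zero) (hg.differentiable two_ne_zero) heq x y
  have hxx := GeneralIntegral.deriv_xx hu hf hg heq x y
  have hxy := GeneralIntegral.deriv_xy hu hf hg heq x y
  have hyy := GeneralIntegral.deriv_yy hu hf hg heq x y
  set w := ux u x y
  set v := uy u x y
  linear_combination
    -((v ^ 2 - 1) * uxx u x y - 2 * w * v * uxy u x y + w ^ 2 * uyy u x y) * hx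
      + w * (v ^ 2 - 1) * hxx - 2 * w ^ 2 * v * hxy + w ^ 3 * hyy

theorem dubreil_jacotin_of_general_integral
    (u : ℝ → ℝ → ℝ) (f g : ℝ → ℝ)
    (hu : ContDiff ℝ 2 (fun p : ℝ × ℝ => u p.1 p.2))
    (hf : ContDiff ℝ 2 f) (hg : ContDiff ℝ 2 g)
    (heq : ∀ x y : ℝ, f (u x y + y) + g (u x y - y) = x)
    (x y : ℝ) (hux : ux u x y ≠ 0) :
    ((uy u x y) ^ 2 - 1) * uxx u x y
      - 2 * ux u x y * uy u x y * uxy u x y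
      + (ux u x y) ^ 2 * uyy u x y = 0 :=
  dubreil_jacotin_of_general_integral_general u f g hu hf hg heq x y
end

section
/- For any u : ℝ² → ℝ which is C² and satisfies (1/2)e^{u(x,y)+y} + u(x,y) − y − (1/2)e^{u(x,y)−y} = x on an open set where u_x ≠ 0, the Dubreil-Jacotin equation (u_y² − 1)u_xx − 2u_x u_y u_xy + u_x² u_yy = 0 holds on that set. -/
/-! The equation is the general integral `f (u + y) + g (u - y) = x` with `f z = eᶻ / 2` and
`g z = z - eᶻ / 2`. Differentiating it once gives `(f' + g') u_x = 1` and
`f' (u_y + 1) + g' (u_y - 1) = 0`; in particular `f' + g' ≠ 0`. Differentiating these once more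
gives three linear relations for `u_xx`, `u_xy`, `u_yy`, and the combination with coefficients
`u_y² - 1`, `-2 u_x u_y`, `u_x²` is `f' + g'` times the Dubreil-Jacotin expression, because the
`f''` and `g''` terms cancel. -/

open Function

section PartialDerivatives

variable {u : ℝ → ℝ → ℝ}

theorem hasDerivAt_ux_s7 (hu : Differentiable ℝ (uncurry u)) (x y : ℝ) :
    HasDerivAt (fun t => u t y) (ux u x y) x :=
  ((hu.comp (differentiable_id.prodMk (differentiable_const y))) x).hasDerivAt

theorem hasDerivAt_uy_s7 (hu : Differentiable ℝ (uncurry u)) (x y : ℝ) :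
    HasDerivAt (fun t => u x t) (uy u x y) y :=
  ((hu.comp ((differentiable_const x).prodMk differentiable_id)) y).hasDerivAt

theorem ux_eq_fderiv_s7 (hu : Differentiable ℝ (uncurry u)) (x y : ℝ) :
    ux u x y = fderiv ℝ (uncurry u) (x, y) (1, 0) := by
  have hline : HasDerivAt (fun t : ℝ => (t, y)) ((1 : ℝ), (0 : ℝ)) x :=
    (hasDerivAt_id x).prodMk (hasDerivAt_const x y)
  exact (hasDerivAt_ux_s7 hu x y).unique
    ((hu (x, y)).hasFDerivAt.comp_hasDerivAt (l := uncurry u) x hline)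

theorem uy_eq_fderiv_s7 (hu : Differentiable ℝ (uncurry u)) (x y : ℝ) :
    uy u x y = fderiv ℝ (uncurry u) (x, y) (0, 1) := by
  have hline : HasDerivAt (fun t : ℝ => (x, t)) ((0 : ℝ), (1 : ℝ)) y :=
    (hasDerivAt_const y x).prodMk (hasDerivAt_id y)
  exact (hasDerivAt_uy_s7 hu x y).unique
    ((hu (x, y)).hasFDerivAt.comp_hasDerivAt (l := uncurry u) y hline)

variable {n : WithTop ℕ∞}

theorem ContDiff.uncurry_ux (hu : ContDiff ℝ (n + 1) (uncurry u)) :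
    ContDiff ℝ n (uncurry (ux u)) := by
  have hdiff : Differentiable ℝ (uncurry u) := hu.differentiable (by simp)
  have : uncurry (ux u) = fun p => fderiv ℝ (uncurry u) p (1, 0) :=
    funext fun p => ux_eq_fderiv_s7 hdiff p.1 p.2
  rw [this]
  exact (hu.fderiv_right le_rfl).clm_apply contDiff_const

theorem ContDiff.uncurry_uy (hu : ContDiff ℝ (n + 1) (uncurry u)) :
    ContDiff ℝ n (uncurry (uy u)) := by
  have hdiff : Differentiable ℝ (uncurry u) := hu.differentiable (by simp)
  have : uncurry (uy u) = fun p => fderiv ℝ (uncurry u) p (0, 1) :=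
    funext fun p => uy_eq_fderiv_s7 hdiff p.1 p.2
  rw [this]
  exact (hu.fderiv_right le_rfl).clm_apply contDiff_const

end PartialDerivatives

section RestrictionToLines

variable {s : Set (ℝ × ℝ)} {F G : ℝ → ℝ → ℝ} {x y a b : ℝ}

theorem HasDerivAt.eq_of_eqOn_horizontal (hs : IsOpen s) (hFG : ∀ p ∈ s, F p.1 p.2 = G p.1 p.2)
    (hp : (x, y) ∈ s) (hF : HasDerivAt (fun t => F t y) a x)
    (hG : HasDerivAt (fun t => G t y) b x) : a = b := by
  have hmem : ∀ᶠ t in nhds x, (t, y) ∈ s :=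
    (hs.preimage (continuous_id.prodMk continuous_const)).eventually_mem hp
  exact hF.unique (hG.congr_of_eventuallyEq (hmem.mono fun t ht => hFG (t, y) ht))

theorem HasDerivAt.eq_of_eqOn_vertical (hs : IsOpen s) (hFG : ∀ p ∈ s, F p.1 p.2 = G p.1 p.2)
    (hp : (x, y) ∈ s) (hF : HasDerivAt (fun t => F x t) a y)
    (hG : HasDerivAt (fun t => G x t) b y) : a = b := by
  have hmem : ∀ᶠ t in nhds y, (x, t) ∈ s :=
    (hs.preimage (continuous_const.prodMk continuous_id)).eventually_mem hp
  exact hF.unique (hG.congr_of_eventuallyEq (hmem.mono fun t ht => hFG (x, t) ht))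

end RestrictionToLines

noncomputable def dubreilJacotin (u : ℝ → ℝ → ℝ) (x y : ℝ) : ℝ :=
  (uy u x y ^ 2 - 1) * uxx u x y - 2 * ux u x y * uy u x y * uxy u x y
    + ux u x y ^ 2 * uyy u x y

section GeneralIntegral

variable {u : ℝ → ℝ → ℝ} {s : Set (ℝ × ℝ)} {f g f' g' f'' g'' : ℝ → ℝ}
  (hs : IsOpen s) (hu : ContDiff ℝ 2 (uncurry u))
  (hf : ∀ z, HasDerivAt f (f' z) z) (hg : ∀ z, HasDerivAt g (g' z) z)
  (hf' : ∀ z, HasDerivAt f' (f'' z) z) (hg' : ∀ z, HasDerivAt g' (g'' z) z)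
  (heq : ∀ p ∈ s, f (u p.1 p.2 + p.2) + g (u p.1 p.2 - p.2) = p.1)
include hs hu hf hg heq

theorem ux_relation_of_general_integral {x y : ℝ} (hp : (x, y) ∈ s) :
    (f' (u x y + y) + g' (u x y - y)) * ux u x y = 1 := by
  have hx := hasDerivAt_ux_s7 (hu.differentiable (by simp)) x y
  have hF := ((hf _).comp x (hx.add_const y)).add ((hg _).comp x (hx.sub_const y))
  have := hF.eq_of_eqOn_horizontal (F := fun x y => f (u x y + y) + g (u x y - y))
    (G := fun x _ => x) hs heq hp (hasDerivAt_id x)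
  linear_combination this

theorem uy_relation_of_general_integral {x y : ℝ} (hp : (x, y) ∈ s) :
    f' (u x y + y) * (uy u x y + 1) + g' (u x y - y) * (uy u x y - 1) = 0 := by
  have hy := hasDerivAt_uy_s7 (hu.differentiable (by simp)) x y
  have hF := ((hf _).comp y (hy.add (hasDerivAt_id y))).add
    ((hg _).comp y (hy.sub (hasDerivAt_id y)))
  exact hF.eq_of_eqOn_vertical (F := fun x y => f (u x y + y) + g (u x y - y))
    (G := fun x _ => x) hs heq hp (hasDerivAt_const y x)

include hf' hg' in
theorem uxx_relation_of_general_integral {x y : ℝ} (hp : (x, y) ∈ s) :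
    (f'' (u x y + y) + g'' (u x y - y)) * ux u x y ^ 2
      + (f' (u x y + y) + g' (u x y - y)) * uxx u x y = 0 := by
  have hx := hasDerivAt_ux_s7 (hu.differentiable (by simp)) x y
  have hxx : HasDerivAt (fun t => ux u t y) (uxx u x y) x :=
    hasDerivAt_ux_s7 ((hu.uncurry_ux (n := 1)).differentiable one_ne_zero) x y
  have hF := (((hf' _).comp x (hx.add_const y)).add ((hg' _).comp x (hx.sub_const y))).mul hxx
  have := hF.eq_of_eqOn_horizontal
    (F := fun x y => (f' (u x y + y) + g' (u x y - y)) * ux u x y)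
    (G := fun _ _ => 1) hs
    (fun p hp => ux_relation_of_general_integral hs hu hf hg heq hp)
    hp (hasDerivAt_const x 1)
  simp only [Pi.add_apply, comp_apply] at this
  linear_combination this

include hf' hg' in
theorem uxy_relation_of_general_integral {x y : ℝ} (hp : (x, y) ∈ s) :
    (f'' (u x y + y) * (uy u x y + 1) + g'' (u x y - y) * (uy u x y - 1)) * ux u x y
      + (f' (u x y + y) + g' (u x y - y)) * uxy u x y = 0 := by
  have hy := hasDerivAt_uy_s7 (hu.differentiable (by simp)) x y
  have hxy : HasDerivAt (fun t => ux u x t) (uxy u x y) y :=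
    hasDerivAt_uy_s7 ((hu.uncurry_ux (n := 1)).differentiable one_ne_zero) x y
  have hF := (((hf' _).comp y (hy.add (hasDerivAt_id y))).add
    ((hg' _).comp y (hy.sub (hasDerivAt_id y)))).mul hxy
  have := hF.eq_of_eqOn_vertical
    (F := fun x y => (f' (u x y + y) + g' (u x y - y)) * ux u x y)
    (G := fun _ _ => 1) hs
    (fun p hp => ux_relation_of_general_integral hs hu hf hg heq hp)
    hp (hasDerivAt_const y 1)
  simp only [Pi.add_apply, Pi.sub_apply, comp_apply, id] at this
  linear_combination this

include hf' hg' in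
theorem uyy_relation_of_general_integral {x y : ℝ} (hp : (x, y) ∈ s) :
    f'' (u x y + y) * (uy u x y + 1) ^ 2 + g'' (u x y - y) * (uy u x y - 1) ^ 2
      + (f' (u x y + y) + g' (u x y - y)) * uyy u x y = 0 := by
  have hy := hasDerivAt_uy_s7 (hu.differentiable (by simp)) x y
  have hyy : HasDerivAt (fun t => uy u x t) (uyy u x y) y :=
    hasDerivAt_uy_s7 ((hu.uncurry_uy (n := 1)).differentiable one_ne_zero) x y
  have hF := (((hf' _).comp y (hy.add (hasDerivAt_id y))).mul (hyy.add_const 1)).add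
    (((hg' _).comp y (hy.sub (hasDerivAt_id y))).mul (hyy.sub_const 1))
  have := hF.eq_of_eqOn_vertical
    (F := fun x y => f' (u x y + y) * (uy u x y + 1) + g' (u x y - y) * (uy u x y - 1))
    (G := fun _ _ => 0) hs
    (fun p hp => uy_relation_of_general_integral hs hu hf hg heq hp)
    hp (hasDerivAt_const y 0)
  simp only [Pi.add_apply, Pi.sub_apply, comp_apply, id] at this
  linear_combination this

include hf' hg' in
theorem dubreilJacotin_eq_zero_of_general_integral {x y : ℝ} (hp : (x, y) ∈ s) :
    dubreilJacotin u x y = 0 := by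
  have hux := ux_relation_of_general_integral hs hu hf hg heq hp
  have hxx := uxx_relation_of_general_integral hs hu hf hg hf' hg' heq hp
  have hxy := uxy_relation_of_general_integral hs hu hf hg hf' hg' heq hp
  have hyy := uyy_relation_of_general_integral hs hu hf hg hf' hg' heq hp
  have hne : f' (u x y + y) + g' (u x y - y) ≠ 0 := left_ne_zero_of_mul_eq_one hux
  refine (mul_eq_zero.mp ?_).resolve_left hne
  unfold dubreilJacotin
  linear_combination (uy u x y ^ 2 - 1) * hxx - 2 * ux u x y * uy u x y * hxy
    + ux u x y ^ 2 * hyy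

end GeneralIntegral

theorem example1_satisfies_equation_general
    (u : ℝ → ℝ → ℝ) (s : Set (ℝ × ℝ)) (hs : IsOpen s)
    (hu : ContDiff ℝ 2 (fun p : ℝ × ℝ => u p.1 p.2))
    (heq : ∀ p ∈ s, (1 / 2) * Real.exp (u p.1 p.2 + p.2) + (u p.1 p.2 - p.2)
        - (1 / 2) * Real.exp (u p.1 p.2 - p.2) = p.1) :
    ∀ p ∈ s, ((uy u p.1 p.2) ^ 2 - 1) * uxx u p.1 p.2
      - 2 * ux u p.1 p.2 * uy u p.1 p.2 * uxy u p.1 p.2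
      + (ux u p.1 p.2) ^ 2 * uyy u p.1 p.2 = 0 := by
  intro p hp
  have hexp (z : ℝ) : HasDerivAt (fun z => 1 / 2 * Real.exp z) (1 / 2 * Real.exp z) z :=
    (Real.hasDerivAt_exp z).const_mul (1 / 2)
  exact dubreilJacotin_eq_zero_of_general_integral (f := fun z => 1 / 2 * Real.exp z)
    (g := fun z => z - 1 / 2 * Real.exp z) hs hu hexp (fun z => (hasDerivAt_id' z).sub (hexp z))
    hexp (fun z => (hexp z).const_sub 1) (fun p hp => by linarith [heq p hp]) hp

theorem example1_satisfies_equation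
    (u : ℝ → ℝ → ℝ) (s : Set (ℝ × ℝ)) (hs : IsOpen s)
    (hu : ContDiff ℝ 2 (fun p : ℝ × ℝ => u p.1 p.2))
    (heq : ∀ p ∈ s, (1 / 2) * Real.exp (u p.1 p.2 + p.2) + (u p.1 p.2 - p.2)
        - (1 / 2) * Real.exp (u p.1 p.2 - p.2) = p.1)
    (hux : ∀ p ∈ s, ux u p.1 p.2 ≠ 0) :
    ∀ p ∈ s, ((uy u p.1 p.2) ^ 2 - 1) * uxx u p.1 p.2
      - 2 * ux u p.1 p.2 * uy u p.1 p.2 * uxy u p.1 p.2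
      + (ux u p.1 p.2) ^ 2 * uyy u p.1 p.2 = 0 :=
  example1_satisfies_equation_general u s hs hu heq
end

section
/- The point (x,y) with y < 0 lying on the curve e^{1+x} = 2/(1−e^{2y}) also satisfies the envelope condition for the second family f₂(x,y,c) = (1/2)e^{c+2y} + c − (1/2)e^c − x = 0: there exists c ∈ ℝ with f₂(x,y,c) = 0 and ∂f₂/∂c (x,y,c) = 0. -/
open Real

lemma mul_eq_of_eq_div_of_ne_zero {K : Type*} [DivisionRing K] {a b d : K} (ha : a ≠ 0)
    (h : a = b / d) : a * d = b := by
  have hd : d ≠ 0 := by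
    rintro rfl
    exact ha (by simpa using h)
  rw [h, div_mul_cancel₀ _ hd]

lemma second_family_deriv_eq_zero {c y : ℝ} (h : exp c * (1 - exp (2 * y)) = 2) :
    (1 / 2) * exp (c + 2 * y) + 1 - (1 / 2) * exp c = 0 := by
  rw [exp_add]
  linear_combination (-1 / 2) * h

/- Along the curve the parameter is `c = 1 + x`: then `∂f₂/∂c = 0` is the curve equation cleared
of its denominator, and `f₂ = ∂f₂/∂c + (c - 1 - x)`. -/
theorem envelope_second_family_general (x y : ℝ)
    (henv : Real.exp (1 + x) = 2 / (1 - Real.exp (2 * y))) :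
    ∃ c : ℝ,
      (1 / 2) * Real.exp (c + 2 * y) + c - (1 / 2) * Real.exp c - x = 0 ∧
      (1 / 2) * Real.exp (c + 2 * y) + 1 - (1 / 2) * Real.exp c = 0 := by
  have hcurve := mul_eq_of_eq_div_of_ne_zero (exp_pos (1 + x)).ne' henv
  have hderiv := second_family_deriv_eq_zero hcurve
  exact ⟨1 + x, by linear_combination hderiv, hderiv⟩

theorem envelope_second_family (x y : ℝ) (hy : y < 0)
    (henv : Real.exp (1 + x) = 2 / (1 - Real.exp (2 * y))) :
    ∃ c : ℝ,
      (1 / 2) * Real.exp (c + 2 * y) + c - (1 / 2) * Real.exp c - x = 0 ∧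
      (1 / 2) * Real.exp (c + 2 * y) + 1 - (1 / 2) * Real.exp c = 0 :=
  envelope_second_family_general x y henv
end
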